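/- For a unit vector k in ℝ³, the matrix k·S (where (S_j)_{kℓ} = -i ε_{jkℓ}) has eigenvalues exactly 0, +1, and -1. -/
import Mathlib


/-- Totally antisymmetric Levi-Civita symbol on three indices, `ε_{012} = 1`. -/
noncomputable def eps3 (i j k : Fin 3) : ℝ :=
  (((j : ℕ) : ℝ) - ((i : ℕ) : ℝ)) * (((k : ℕ) : ℝ) - ((i : ℕ) : ℝ)) *
    (((k : ℕ) : ℝ) - ((j : ℕ) : ℝ)) / 2

theorem stmt_4 (k : Fin 3 → ℝ) (hk : ∑ j, (k j) ^ 2 = 1)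
    (M : Matrix (Fin 3) (Fin 3) ℂ)
    (hM : ∀ a l : Fin 3, M a l = ∑ j : Fin 3, (k j : ℂ) * (-Complex.I * (eps3 j a l : ℂ))) :
    spectrum ℂ M = {0, 1, -1} := by
  have hdet : ∀ x : ℂ, (algebraMap ℂ (Matrix (Fin 3) (Fin 3) ℂ) x - M).det
      = x * (x - 1) * (x + 1) := by
    intro x
    have hk' : (k 0 : ℂ)^2 + (k 1 : ℂ)^2 + (k 2 : ℂ)^2 = 1 := by
      rw [Fin.sum_univ_three] at hk; exact_mod_cast hk
    rw [Matrix.det_fin_three]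
    simp only [Matrix.sub_apply, Matrix.algebraMap_matrix_apply, hM, Fin.sum_univ_three, eps3]
    norm_num [Fin.ext_iff]
    linear_combination (-x) * hk' +
      (x * ((k 0 : ℂ)^2 + (k 1 : ℂ)^2 + (k 2 : ℂ)^2)) * Complex.I_sq
  ext x
  rw [spectrum.mem_iff, Matrix.isUnit_iff_isUnit_det, isUnit_iff_ne_zero, not_not, hdet]
  simp only [mul_eq_zero, sub_eq_zero, add_eq_zero_iff_eq_neg, Set.mem_insert_iff,
    Set.mem_singleton_iff, or_assoc]
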